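/- For every integer n ≥ 0, the number of 3-Motzkin paths of length n equals the number of Schröder paths of length 2(n+1) having no peak of odd height. -/

import Mathlib

/-- Steps of a 3-Motzkin path: `U = (1,1)`, `D = (1,-1)` and three
labeled horizontal steps `H0, H1, H2` (each equal to `(1,0)`). -/
inductive MStep : Type
  | U : MStep
  | D : MStep
  | H0 : MStep
  | H1 : MStep
  | H2 : MStep
  deriving DecidableEq

/-- The contribution of a step to the y-coordinate. -/
def MStep.eff : MStep → ℤ
  | U => 1
  | D => -1
  | H0 => 0
  | H1 => 0
  | H2 => 0

/-- The height (y-coordinate of the starting point) of the `i`-th step (0-indexed). -/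
def mHeight (L : List MStep) (i : ℕ) : ℤ := ((L.take i).map MStep.eff).sum

/-- `L` is a 3-Motzkin path of length `n`: it has `n` steps, ends at height `0`,
and never goes below the x-axis. -/
def IsMotzkin3 (L : List MStep) (n : ℕ) : Prop :=
  L.length = n ∧ (L.map MStep.eff).sum = 0 ∧ ∀ i, 0 ≤ mHeight L i

/-- The number of `H2` steps of `L` of positive height. -/
def posH2Steps (L : List MStep) : ℕ :=
  ((Finset.range L.length).filter
    (fun i => L[i]? = some MStep.H2 ∧ 0 < mHeight L i)).card

/-- Steps of a Schröder path: `U = (1,1)`, `D = (1,-1)`, `H = H² = (2,0)`. -/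
inductive SStep : Type
  | U : SStep
  | D : SStep
  | H : SStep
  deriving DecidableEq

/-- The contribution of a step to the x-coordinate. -/
def SStep.len : SStep → ℕ
  | U => 1
  | D => 1
  | H => 2

/-- The contribution of a step to the y-coordinate. -/
def SStep.eff : SStep → ℤ
  | U => 1
  | D => -1
  | H => 0

/-- The height (y-coordinate of the starting point) of the `i`-th step (0-indexed);
for `i = L.length` this is the final height of the path. -/
def sHeight (L : List SStep) (i : ℕ) : ℤ := ((L.take i).map SStep.eff).sum

/-- `L` is a Schröder path of length `2 * n`: it has total horizontal displacement `2 * n`,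
ends at height `0`, and never goes below the x-axis. -/
def IsSchroder (L : List SStep) (n : ℕ) : Prop :=
  (L.map SStep.len).sum = 2 * n ∧ (L.map SStep.eff).sum = 0 ∧ ∀ i, 0 ≤ sHeight L i

/-- A peak at position `i`: an up step immediately followed by a down step.
The height of this peak is `sHeight L (i+1)`, the height of its down step. -/
def IsPeakAt (L : List SStep) (i : ℕ) : Prop :=
  L[i]? = some SStep.U ∧ L[i+1]? = some SStep.D

/-- `L` has no peak of odd height. -/
def NoOddPeak (L : List SStep) : Prop :=
  ∀ i, IsPeakAt L i → ¬ Odd (sHeight L (i+1))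

/-- `L` has no peak of even height. -/
def NoEvenPeak (L : List SStep) : Prop :=
  ∀ i, IsPeakAt L i → ¬ Even (sHeight L (i+1))

/-- `L` is UH-free: no up step is immediately followed by a horizontal step. -/
def UHFree (L : List SStep) : Prop :=
  ∀ i, ¬ (L[i]? = some SStep.U ∧ L[i+1]? = some SStep.H)

/-- The number of peaks of `L` of even height greater than `2`. -/
def evenHighPeaks (L : List SStep) : ℕ :=
  ((Finset.range L.length).filter
    (fun i => L[i]? = some SStep.U ∧ L[i+1]? = some SStep.D ∧
      Even (sHeight L (i+1)) ∧ 2 < sHeight L (i+1))).card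

/-!
Cutting a Schröder path at its first return to the axis writes it as `H Q` or `U P D Q`; inside
`U P D` the peaks of `P` rise by one, which flips their parity, and `U D` is itself a peak of
height one. So the generating functions `A` and `B` (by semilength) of Schröder paths all of whose
peaks have even, resp. odd, height satisfy `A = 1 + x B A` and `B = 1 + x B + x A B`.
Substituting the first equation into `B A = A + x B A + x A (B A)` gives
`B A = 1 + 3 x B A + x² (B A)²`, the equation of the generating function `M` of 3-Motzkin paths;
hence `B A = M` and `A = 1 + x M`.
The proof makes this bijective, coding the three kinds of paths by trees that follow these
decompositions.
-/

theorem Nat.card_subtype_eq_of_injective {β γ : Type*} {g : β → γ} (hg : g.Injective)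
    {p : β → Prop} {q : γ → Prop} (hq : ∀ c, q c ↔ ∃ b, p b ∧ g b = c) :
    Nat.card {c // q c} = Nat.card {b // p b} := by
  have : {c | q c} = g '' {b | p b} := Set.ext hq
  calc Nat.card {c // q c} = Nat.card (g '' {b | p b}) := by rw [← this]; rfl
    _ = Nat.card {b // p b} := Nat.card_image_of_injective hg _

section Excursion

variable {α : Type*} {f : α → ℤ}

variable (f) in
/-- The walk with increments `f`, started at height `c`, never goes below `b`. -/
def StaysAbove (b : ℤ) : ℤ → List α → Prop
  | c, [] => b ≤ c
  | c, x :: L => b ≤ c ∧ StaysAbove b (c + f x) L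

variable (f) in
def IsExcursion (L : List α) : Prop :=
  (L.map f).sum = 0 ∧ StaysAbove f 0 0 L

theorem StaysAbove.le_start {b c : ℤ} {L : List α} (h : StaysAbove f b c L) : b ≤ c := by
  cases L <;> simp_all [StaysAbove]

theorem StaysAbove.mono {b b' c : ℤ} {L : List α} (h : StaysAbove f b c L) (hb : b' ≤ b) :
    StaysAbove f b' c L := by
  induction L generalizing c with
  | nil => exact hb.trans h
  | cons x L ih => exact ⟨hb.trans h.1, ih h.2⟩

theorem staysAbove_append {b c : ℤ} {P Q : List α} :
    StaysAbove f b c (P ++ Q) ↔ StaysAbove f b c P ∧ StaysAbove f b (c + (P.map f).sum) Q := by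
  induction P generalizing c with
  | nil => simpa [StaysAbove] using fun h => h.le_start
  | cons x P ih => simp [StaysAbove, ih, add_assoc, and_assoc]

theorem StaysAbove.le_end {b c : ℤ} {L : List α} (h : StaysAbove f b c L) :
    b ≤ c + (L.map f).sum := by
  simpa [StaysAbove] using (staysAbove_append (Q := []).1 (by simpa using h)).2

theorem staysAbove_add_const {b c k : ℤ} {L : List α} :
    StaysAbove f (b + k) (c + k) L ↔ StaysAbove f b c L := by
  induction L generalizing c with
  | nil => simp [StaysAbove]
  | cons x L ih => simp [StaysAbove, ← ih, add_right_comm]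

theorem staysAbove_iff_forall_take {b c : ℤ} {L : List α} :
    StaysAbove f b c L ↔ ∀ i, b ≤ c + ((L.take i).map f).sum := by
  induction L generalizing c with
  | nil => simp [StaysAbove]
  | cons x L ih =>
    rw [← Nat.and_forall_add_one]
    simp [StaysAbove, ih, add_assoc]

theorem StaysAbove.exists_eq_append_cons {d : α} (hd : ∀ x, f x < 0 → x = d) (hfd : f d = -1)
    {b c : ℤ} {L : List α} (hL : StaysAbove f (b - 1) c L) (hc : b ≤ c)
    (hend : c + (L.map f).sum < b) :
    ∃ P Q, L = P ++ d :: Q ∧ StaysAbove f b c P ∧ c + (P.map f).sum = b ∧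
      StaysAbove f (b - 1) (b - 1) Q := by
  induction L generalizing c with
  | nil => simp at hend; omega
  | cons x L ih =>
    obtain ⟨-, hL⟩ := hL
    by_cases hx : b ≤ c + f x
    · obtain ⟨P, Q, rfl, hP, hPsum, hQ⟩ := ih hL hx (by simpa [add_assoc] using hend)
      exact ⟨x :: P, Q, rfl, ⟨hc, hP⟩, by simpa [add_assoc] using hPsum, hQ⟩
    · have hxd := hd x (by omega)
      subst hxd
      have : c + f x = b - 1 := le_antisymm (by omega) hL.le_start
      exact ⟨[], L, rfl, hc, by simp; omega, by rwa [this] at hL⟩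

theorem StaysAbove.append_cons_inj {d : α} (hd : f d < 0) {b c : ℤ} {P P' Q Q' : List α}
    (hP : StaysAbove f b c P) (hPend : c + (P.map f).sum = b)
    (hP' : StaysAbove f b c P') (hP'end : c + (P'.map f).sum = b)
    (h : P ++ d :: Q = P' ++ d :: Q') : P = P' ∧ Q = Q' := by
  induction P generalizing c P' with
  | nil =>
    cases P' with
    | nil => simpa using h
    | cons y P' =>
      obtain ⟨rfl, rfl⟩ := List.cons_eq_cons.1 h
      have := hP'.2.le_start
      simp at hPend; omega
  | cons x P ih =>
    cases P' with
    | nil =>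
      obtain ⟨rfl, rfl⟩ := List.cons_eq_cons.1 h
      have := hP.2.le_start
      simp at hP'end; omega
    | cons y P' =>
      simp only [List.cons_append, List.cons.injEq] at h
      obtain ⟨rfl, h⟩ := h
      obtain ⟨rfl, rfl⟩ := ih hP.2 (by simpa [add_assoc] using hPend) hP'.2
        (by simpa [add_assoc] using hP'end) h
      exact ⟨rfl, rfl⟩

theorem IsExcursion.append_cons_inj {d : α} (hd : f d < 0) {P P' Q Q' : List α}
    (hP : IsExcursion f P) (hP' : IsExcursion f P') (h : P ++ d :: Q = P' ++ d :: Q') :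
    P = P' ∧ Q = Q' :=
  StaysAbove.append_cons_inj hd hP.2 (by simp [hP.1]) hP'.2 (by simp [hP'.1]) h

theorem isExcursion_iff_forall_take {L : List α} :
    IsExcursion f L ↔ (L.map f).sum = 0 ∧ ∀ i, 0 ≤ ((L.take i).map f).sum := by
  simp [IsExcursion, staysAbove_iff_forall_take]

theorem isExcursion_nil : IsExcursion f [] := by simp [IsExcursion, StaysAbove]

theorem isExcursion_cons_of_eq_zero {x : α} (hx : f x = 0) {L : List α} :
    IsExcursion f (x :: L) ↔ IsExcursion f L := by
  simp [IsExcursion, StaysAbove, hx]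

theorem IsExcursion.head?_ne {x : α} (hx : f x < 0) {L : List α} (hL : IsExcursion f L) :
    L.head? ≠ some x := by
  intro h
  cases L with
  | nil => simp at h
  | cons y L =>
    obtain rfl : y = x := by simpa using h
    have := hL.2.2.le_start
    omega

theorem IsExcursion.getLast?_ne {x : α} (hx : 0 < f x) {L : List α} (hL : IsExcursion f L) :
    L.getLast? ≠ some x := by
  rw [Ne, List.getLast?_eq_some_iff]
  rintro ⟨L, rfl⟩
  have hend := (staysAbove_append.1 hL.2).1.le_end
  have hsum := hL.1
  simp at hsum hend
  omega

section UpDown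

variable {u d : α} (hu : f u = 1) (hd : f d = -1)
include hu hd

theorem IsExcursion.up_append_down {P Q : List α} (hP : IsExcursion f P) (hQ : IsExcursion f Q) :
    IsExcursion f (u :: (P ++ d :: Q)) := by
  obtain ⟨hPs, hP⟩ := hP
  obtain ⟨hQs, hQ⟩ := hQ
  refine ⟨by simp [hu, hd, hPs, hQs], le_rfl, staysAbove_append.2 ⟨?_, ?_⟩⟩
  · simpa [hu] using ((staysAbove_add_const (k := 1)).2 hP).mono zero_le_one
  · simpa [hPs, hu, hd, StaysAbove] using hQ

@[elab_as_elim]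
theorem IsExcursion.induction (hstep : ∀ x, x = u ∨ x = d ∨ f x = 0)
    {motive : List α → Prop} (nil : motive [])
    (level : ∀ x L, f x = 0 → IsExcursion f L → motive L → motive (x :: L))
    (bump : ∀ P Q, IsExcursion f P → IsExcursion f Q → motive P → motive Q →
      motive (u :: (P ++ d :: Q)))
    {L : List α} (hL : IsExcursion f L) : motive L := by
  induction h : L.length using Nat.strong_induction_on generalizing L with
  | _ n ih =>
  subst h
  match L with
  | [] => exact nil
  | x :: R =>
    obtain ⟨hsum, -, hR⟩ := hL
    rcases hstep x with rfl | rfl | hx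
    · have hneg : ∀ y, f y < 0 → y = d := fun y hy => by
        rcases hstep y with rfl | rfl | hy' <;> first | rfl | omega
      obtain ⟨P, Q, rfl, hP, hPsum, hQ⟩ := StaysAbove.exists_eq_append_cons hneg hd (b := 1)
        (by simpa [hu] using hR) le_rfl (by simp_all)
      have hPexc : IsExcursion f P :=
        ⟨by omega, staysAbove_add_const.1 (by simpa using hP : StaysAbove f (0 + 1) (0 + 1) P)⟩
      have hQexc : IsExcursion f Q := ⟨by simp_all, by simpa using hQ⟩
      exact bump P Q hPexc hQexc (ih _ (by simp) hPexc rfl) (ih _ (by simp; omega) hQexc rfl)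
    · have := hR.le_start
      omega
    · have hRexc : IsExcursion f R := ⟨by simpa [hx] using hsum, by simpa [hx] using hR⟩
      exact level x R hx hRexc (ih _ (by simp) hRexc rfl)

end UpDown

end Excursion

def PeaksOfParity (c : ℤ) (L : List SStep) : Prop :=
  ∀ i, IsPeakAt L i → Even (c + sHeight L (i + 1))

theorem noOddPeak_iff_peaksOfParity_zero {L : List SStep} : NoOddPeak L ↔ PeaksOfParity 0 L := by
  simp [NoOddPeak, PeaksOfParity, Int.not_odd_iff_even]

theorem peaksOfParity_nil (c : ℤ) : PeaksOfParity c [] := by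
  simp [PeaksOfParity, IsPeakAt]

theorem peaksOfParity_add_two {c : ℤ} {L : List SStep} :
    PeaksOfParity (c + 2) L ↔ PeaksOfParity c L := by
  simp [PeaksOfParity, add_right_comm c 2, Int.even_add]

theorem peaksOfParity_cons {c : ℤ} {x : SStep} {L : List SStep} :
    PeaksOfParity c (x :: L) ↔
      (x = .U → L.head? = some .D → Even (c + 1)) ∧ PeaksOfParity (c + x.eff) L := by
  rw [PeaksOfParity, ← Nat.and_forall_add_one]
  cases x <;> simp [PeaksOfParity, IsPeakAt, sHeight, SStep.eff, List.head?_eq_getElem?, add_assoc]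

theorem peaksOfParity_append_cons_D {c : ℤ} {P Q : List SStep} :
    PeaksOfParity c (P ++ .D :: Q) ↔ PeaksOfParity c P ∧
      (P.getLast? = some .U → Even (c + (P.map SStep.eff).sum)) ∧
      PeaksOfParity (c + (P.map SStep.eff).sum - 1) Q := by
  induction P generalizing c with
  | nil => simp [peaksOfParity_cons, peaksOfParity_nil, SStep.eff, sub_eq_add_neg]
  | cons x P ih =>
    rw [List.cons_append, peaksOfParity_cons, ih, peaksOfParity_cons]
    cases P with
    | nil => cases x <;> simp [peaksOfParity_nil, SStep.eff, add_comm]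
    | cons y P => simp [add_assoc, and_assoc]

theorem peaksOfParity_up_append_down {c : ℤ} {P Q : List SStep}
    (hP : IsExcursion SStep.eff P) :
    PeaksOfParity c (.U :: (P ++ .D :: Q)) ↔
      (P = [] → Even (c + 1)) ∧ PeaksOfParity (c + 1) P ∧ PeaksOfParity c Q := by
  have hhead := hP.head?_ne (x := .D) (by decide)
  have hlast := hP.getLast?_ne (x := .U) (by decide)
  rw [peaksOfParity_cons, peaksOfParity_append_cons_D, hP.1]
  cases P with
  | nil => simp [peaksOfParity_nil, SStep.eff]
  | cons y P => simp_all [SStep.eff]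

inductive MotzkinTree : Type
  | nil : MotzkinTree
  | h0 (r : MotzkinTree) : MotzkinTree
  | h1 (r : MotzkinTree) : MotzkinTree
  | h2 (r : MotzkinTree) : MotzkinTree
  | ud (p r : MotzkinTree) : MotzkinTree

namespace MotzkinTree

def size : MotzkinTree → ℕ
  | nil => 0
  | h0 r | h1 r | h2 r => r.size + 1
  | ud p r => p.size + r.size + 2

def toPath : MotzkinTree → List MStep
  | nil => []
  | h0 r => .H0 :: r.toPath
  | h1 r => .H1 :: r.toPath
  | h2 r => .H2 :: r.toPath
  | ud p r => .U :: (p.toPath ++ .D :: r.toPath)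

theorem length_toPath (m : MotzkinTree) : m.toPath.length = m.size := by
  induction m <;> simp [toPath, size, *]
  omega

theorem isExcursion_toPath (m : MotzkinTree) : IsExcursion MStep.eff m.toPath := by
  induction m with
  | nil => exact isExcursion_nil
  | h0 r ih | h1 r ih | h2 r ih => exact (isExcursion_cons_of_eq_zero (f := MStep.eff) rfl).2 ih
  | ud p r ihp ihr => exact IsExcursion.up_append_down (f := MStep.eff) rfl rfl ihp ihr

theorem toPath_injective : Function.Injective toPath := by
  intro m m' h
  induction m generalizing m' with
  | nil => cases m' <;> simp_all [toPath]
  | h0 r ih | h1 r ih | h2 r ih =>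
    cases m' <;> simp [toPath] at h ⊢
    exact ih h
  | ud p r ihp ihr =>
    cases m' with
    | ud p' r' =>
      simp only [toPath, List.cons.injEq, true_and] at h
      obtain ⟨hp, hr⟩ := (isExcursion_toPath p).append_cons_inj (by decide)
        (isExcursion_toPath p') h
      rw [ihp hp, ihr hr]
    | _ => simp [toPath] at h

theorem exists_toPath_eq {L : List MStep} (hL : IsExcursion MStep.eff L) :
    ∃ m : MotzkinTree, m.toPath = L := by
  refine IsExcursion.induction (f := MStep.eff) (u := .U) (d := .D) rfl rfl
    (fun x => by cases x <;> simp [MStep.eff]) ?_ ?_ ?_ hL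
  · exact ⟨nil, rfl⟩
  · rintro x _ hx - ⟨m, rfl⟩
    cases x <;> simp [MStep.eff] at hx
    exacts [⟨h0 m, rfl⟩, ⟨h1 m, rfl⟩, ⟨h2 m, rfl⟩]
  · rintro _ _ - - ⟨p, rfl⟩ ⟨r, rfl⟩
    exact ⟨ud p r, rfl⟩

end MotzkinTree

theorem isMotzkin3_iff_exists_motzkinTree {L : List MStep} {n : ℕ} :
    IsMotzkin3 L n ↔ ∃ m : MotzkinTree, m.size = n ∧ m.toPath = L := by
  have : IsMotzkin3 L n ↔ L.length = n ∧ IsExcursion MStep.eff L := by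
    rw [isExcursion_iff_forall_take]; rfl
  rw [this]
  constructor
  · rintro ⟨rfl, hL⟩
    obtain ⟨m, rfl⟩ := MotzkinTree.exists_toPath_eq hL
    exact ⟨m, (MotzkinTree.length_toPath m).symm, rfl⟩
  · rintro ⟨m, rfl, rfl⟩
    exact ⟨MotzkinTree.length_toPath m, MotzkinTree.isExcursion_toPath m⟩

/- Codes of the Schröder paths all of whose peaks have even, resp. odd, height (see `toPath`):
an `EvenPeakTree` is a list of `OddPeakTree`s, in which `nil` stands for a step `H` and any other
`b` for `U b D`. -/
mutual
inductive EvenPeakTree : Type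
  | nil : EvenPeakTree
  | cons (b : OddPeakTree) (a : EvenPeakTree) : EvenPeakTree
inductive OddPeakTree : Type
  | nil : OddPeakTree
  | h (r : OddPeakTree) : OddPeakTree
  | ud (a : EvenPeakTree) (r : OddPeakTree) : OddPeakTree
end

mutual
def EvenPeakTree.size : EvenPeakTree → ℕ
  | .nil => 0
  | .cons b a => b.size + a.size + 1
def OddPeakTree.size : OddPeakTree → ℕ
  | .nil => 0
  | .h r => r.size + 1
  | .ud a r => a.size + r.size + 1
end

mutual
def EvenPeakTree.toPath : EvenPeakTree → List SStep
  | .nil => []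
  | .cons .nil a => .H :: a.toPath
  | .cons b a => .U :: (b.toPath ++ .D :: a.toPath)
def OddPeakTree.toPath : OddPeakTree → List SStep
  | .nil => []
  | .h r => .H :: r.toPath
  | .ud a r => .U :: (a.toPath ++ .D :: r.toPath)
end

theorem OddPeakTree.toPath_eq_nil {b : OddPeakTree} : b.toPath = [] ↔ b = .nil := by
  cases b <;> simp [OddPeakTree.toPath]

mutual
theorem EvenPeakTree.sum_len_toPath : ∀ a : EvenPeakTree,
    (a.toPath.map SStep.len).sum = 2 * a.size
  | .nil => rfl
  | .cons b a => by
    have hb := b.sum_len_toPath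
    have ha := a.sum_len_toPath
    by_cases hb0 : b = .nil
    · subst hb0
      simp [EvenPeakTree.toPath, EvenPeakTree.size, OddPeakTree.size, SStep.len, ha]
      ring
    · simp [EvenPeakTree.toPath.eq_3 b a hb0, EvenPeakTree.size, SStep.len, ha, hb]
      ring
theorem OddPeakTree.sum_len_toPath : ∀ b : OddPeakTree,
    (b.toPath.map SStep.len).sum = 2 * b.size
  | .nil => rfl
  | .h r => by simp [OddPeakTree.toPath, OddPeakTree.size, SStep.len, r.sum_len_toPath]; ring
  | .ud a r => by
    simp [OddPeakTree.toPath, OddPeakTree.size, SStep.len, a.sum_len_toPath, r.sum_len_toPath]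
    ring
end

mutual
theorem EvenPeakTree.isExcursion_toPath : ∀ a : EvenPeakTree, IsExcursion SStep.eff a.toPath
  | .nil => isExcursion_nil
  | .cons b a => by
    by_cases hb0 : b = .nil
    · subst hb0
      exact (isExcursion_cons_of_eq_zero (f := SStep.eff) rfl).2 a.isExcursion_toPath
    · rw [EvenPeakTree.toPath.eq_3 b a hb0]
      exact IsExcursion.up_append_down (f := SStep.eff) rfl rfl b.isExcursion_toPath
        a.isExcursion_toPath
theorem OddPeakTree.isExcursion_toPath : ∀ b : OddPeakTree, IsExcursion SStep.eff b.toPath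
  | .nil => isExcursion_nil
  | .h r => (isExcursion_cons_of_eq_zero (f := SStep.eff) rfl).2 r.isExcursion_toPath
  | .ud a r => IsExcursion.up_append_down (f := SStep.eff) rfl rfl a.isExcursion_toPath
      r.isExcursion_toPath
end

mutual
theorem EvenPeakTree.peaksOfParity_toPath : ∀ a : EvenPeakTree, PeaksOfParity 0 a.toPath
  | .nil => peaksOfParity_nil 0
  | .cons b a => by
    by_cases hb0 : b = .nil
    · subst hb0
      simpa [EvenPeakTree.toPath, peaksOfParity_cons, SStep.eff] using a.peaksOfParity_toPath
    · rw [EvenPeakTree.toPath.eq_3 b a hb0, peaksOfParity_up_append_down b.isExcursion_toPath]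
      exact ⟨fun h => absurd (OddPeakTree.toPath_eq_nil.1 h) hb0, b.peaksOfParity_toPath,
        a.peaksOfParity_toPath⟩
theorem OddPeakTree.peaksOfParity_toPath : ∀ b : OddPeakTree, PeaksOfParity 1 b.toPath
  | .nil => peaksOfParity_nil 1
  | .h r => by
    simpa [OddPeakTree.toPath, peaksOfParity_cons, SStep.eff] using r.peaksOfParity_toPath
  | .ud a r => by
    rw [OddPeakTree.toPath, peaksOfParity_up_append_down a.isExcursion_toPath]
    exact ⟨fun _ => even_two, peaksOfParity_add_two.2 a.peaksOfParity_toPath,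
      r.peaksOfParity_toPath⟩
end

theorem EvenPeakTree.toPath_eq_nil {a : EvenPeakTree} : a.toPath = [] ↔ a = .nil := by
  rcases a with _ | ⟨b, a⟩
  · simp [EvenPeakTree.toPath]
  · by_cases hb : b = .nil
    · simp [hb, EvenPeakTree.toPath]
    · simp [EvenPeakTree.toPath.eq_3 b a hb]

mutual
theorem EvenPeakTree.eq_of_toPath_eq : ∀ (a a' : EvenPeakTree), a.toPath = a'.toPath → a = a'
  | .nil, _, h => (EvenPeakTree.toPath_eq_nil.1 h.symm).symm
  | .cons _ _, .nil, h => absurd (EvenPeakTree.toPath_eq_nil.1 h) nofun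
  | .cons b a, .cons b' a', h => by
    by_cases hb : b = .nil <;> by_cases hb' : b' = .nil
    · subst hb hb'
      simp only [EvenPeakTree.toPath, List.cons.injEq, true_and] at h
      rw [EvenPeakTree.eq_of_toPath_eq a a' h]
    · subst hb
      simp [EvenPeakTree.toPath, EvenPeakTree.toPath.eq_3 b' a' hb'] at h
    · subst hb'
      simp [EvenPeakTree.toPath, EvenPeakTree.toPath.eq_3 b a hb] at h
    · simp only [EvenPeakTree.toPath.eq_3 _ _ hb, EvenPeakTree.toPath.eq_3 _ _ hb',
        List.cons.injEq, true_and] at h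
      obtain ⟨hP, hQ⟩ := b.isExcursion_toPath.append_cons_inj (by decide)
        b'.isExcursion_toPath h
      rw [OddPeakTree.eq_of_toPath_eq b b' hP, EvenPeakTree.eq_of_toPath_eq a a' hQ]
theorem OddPeakTree.eq_of_toPath_eq : ∀ (b b' : OddPeakTree), b.toPath = b'.toPath → b = b'
  | .nil, _, h => (OddPeakTree.toPath_eq_nil.1 h.symm).symm
  | .h _, .nil, h | .ud _ _, .nil, h | .h _, .ud _ _, h | .ud _ _, .h _, h => by
    simp [OddPeakTree.toPath] at h
  | .h r, .h r', h => by
    simp only [OddPeakTree.toPath, List.cons.injEq, true_and] at h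
    rw [OddPeakTree.eq_of_toPath_eq r r' h]
  | .ud a r, .ud a' r', h => by
    simp only [OddPeakTree.toPath, List.cons.injEq, true_and] at h
    obtain ⟨hP, hQ⟩ := a.isExcursion_toPath.append_cons_inj (by decide) a'.isExcursion_toPath h
    rw [EvenPeakTree.eq_of_toPath_eq a a' hP, OddPeakTree.eq_of_toPath_eq r r' hQ]
end

theorem exists_peakTree_toPath_eq {L : List SStep} (hL : IsExcursion SStep.eff L) :
    (PeaksOfParity 0 L → ∃ a : EvenPeakTree, a.toPath = L) ∧
      (PeaksOfParity 1 L → ∃ b : OddPeakTree, b.toPath = L) := by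
  refine IsExcursion.induction (f := SStep.eff) (u := .U) (d := .D) rfl rfl
    (fun x => by cases x <;> simp [SStep.eff]) ?_ ?_ ?_ hL
  · exact ⟨fun _ => ⟨.nil, rfl⟩, fun _ => ⟨.nil, rfl⟩⟩
  · rintro x L hx - ⟨ihA, ihB⟩
    obtain rfl : x = .H := by cases x <;> simp_all [SStep.eff]
    simp only [peaksOfParity_cons, SStep.eff, add_zero, reduceCtorEq, false_implies, true_and]
    refine ⟨fun h => ?_, fun h => ?_⟩
    · obtain ⟨a, rfl⟩ := ihA h
      exact ⟨.cons .nil a, rfl⟩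
    · obtain ⟨b, rfl⟩ := ihB h
      exact ⟨.h b, rfl⟩
  · rintro P Q hP - ⟨ihPA, ihPB⟩ ⟨ihQA, ihQB⟩
    simp only [peaksOfParity_up_append_down hP]
    constructor
    · rintro ⟨hne, hP1, hQ0⟩
      obtain ⟨b, rfl⟩ := ihPB hP1
      obtain ⟨a, rfl⟩ := ihQA hQ0
      have hb : b ≠ .nil := by
        rintro rfl
        simp [OddPeakTree.toPath] at hne
      exact ⟨.cons b a, EvenPeakTree.toPath.eq_3 b a hb⟩
    · rintro ⟨-, hP2, hQ1⟩
      obtain ⟨a, rfl⟩ := ihPA (peaksOfParity_add_two.1 hP2)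
      obtain ⟨b, rfl⟩ := ihQB hQ1
      exact ⟨.ud a b, rfl⟩

theorem isSchroder_and_noOddPeak_iff_exists_evenPeakTree {L : List SStep} {n : ℕ} :
    IsSchroder L n ∧ NoOddPeak L ↔ ∃ a : EvenPeakTree, a.size = n ∧ a.toPath = L := by
  have : IsSchroder L n ↔ (L.map SStep.len).sum = 2 * n ∧ IsExcursion SStep.eff L := by
    rw [isExcursion_iff_forall_take]; rfl
  rw [this, noOddPeak_iff_peaksOfParity_zero]
  constructor
  · rintro ⟨⟨hlen, hL⟩, hpk⟩
    obtain ⟨a, rfl⟩ := (exists_peakTree_toPath_eq hL).1 hpk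
    exact ⟨a, by rw [a.sum_len_toPath] at hlen; omega, rfl⟩
  · rintro ⟨a, rfl, rfl⟩
    exact ⟨⟨a.sum_len_toPath, a.isExcursion_toPath⟩, a.peaksOfParity_toPath⟩

theorem EvenPeakTree.card_succ_eq_card_pair (n : ℕ) :
    Nat.card {a : EvenPeakTree // a.size = n + 1} =
      Nat.card {p : OddPeakTree × EvenPeakTree // p.1.size + p.2.size = n} := by
  refine Nat.card_subtype_eq_of_injective (g := fun p => EvenPeakTree.cons p.1 p.2)
    (fun p q h => by simpa [Prod.ext_iff] using h) fun a => ?_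
  cases a <;> simp [EvenPeakTree.size]

namespace MotzkinTree

def ofPair : OddPeakTree → EvenPeakTree → MotzkinTree
  | .nil, .nil => nil
  | .nil, .cons b a => h2 (ofPair b a)
  | .h b, a => h0 (ofPair b a)
  | .ud .nil b, a => h1 (ofPair b a)
  | .ud (.cons b' a') b, a => ud (ofPair b' a') (ofPair b a)
termination_by b a => sizeOf b + sizeOf a

def toPair : MotzkinTree → OddPeakTree × EvenPeakTree
  | nil => (.nil, .nil)
  | h0 r => (.h r.toPair.1, r.toPair.2)
  | h1 r => (.ud .nil r.toPair.1, r.toPair.2)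
  | h2 r => (.nil, .cons r.toPair.1 r.toPair.2)
  | ud p r => (.ud (.cons p.toPair.1 p.toPair.2) r.toPair.1, r.toPair.2)

theorem toPair_ofPair (b : OddPeakTree) (a : EvenPeakTree) : (ofPair b a).toPair = (b, a) := by
  induction b, a using ofPair.induct <;> simp [ofPair, toPair, *]

theorem ofPair_toPair (m : MotzkinTree) : ofPair m.toPair.1 m.toPair.2 = m := by
  induction m <;> simp [ofPair, toPair, *]

theorem size_ofPair (b : OddPeakTree) (a : EvenPeakTree) :
    (ofPair b a).size = b.size + a.size := by
  induction b, a using ofPair.induct <;>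
    simp [ofPair, size, OddPeakTree.size, EvenPeakTree.size, *] <;> omega

theorem card_eq_card_pair (n : ℕ) :
    Nat.card {m : MotzkinTree // m.size = n} =
      Nat.card {p : OddPeakTree × EvenPeakTree // p.1.size + p.2.size = n} := by
  refine Nat.card_subtype_eq_of_injective (g := fun p => ofPair p.1 p.2)
    (fun p q h => by simpa [toPair_ofPair] using congrArg toPair h) fun m => ⟨?_, ?_⟩
  · rintro rfl
    exact ⟨m.toPair, by rw [← size_ofPair, ofPair_toPair], ofPair_toPair m⟩
  · rintro ⟨p, hp, rfl⟩
    rw [size_ofPair, hp]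

end MotzkinTree

/-- For every integer `n ≥ 0`, the number of 3-Motzkin paths of length `n` equals the
number of Schröder paths of length `2 * (n + 1)` having no peak of odd height. -/
theorem stmt1 (n : ℕ) :
    Nat.card {L : List MStep // IsMotzkin3 L n} =
    Nat.card {L : List SStep // IsSchroder L (n + 1) ∧ NoOddPeak L} := by
  calc Nat.card {L : List MStep // IsMotzkin3 L n}
      = Nat.card {m : MotzkinTree // m.size = n} :=
        Nat.card_subtype_eq_of_injective MotzkinTree.toPath_injective
          fun _ => isMotzkin3_iff_exists_motzkinTree
    _ = Nat.card {a : EvenPeakTree // a.size = n + 1} := by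
        rw [MotzkinTree.card_eq_card_pair, EvenPeakTree.card_succ_eq_card_pair]
    _ = Nat.card {L : List SStep // IsSchroder L (n + 1) ∧ NoOddPeak L} :=
        (Nat.card_subtype_eq_of_injective (fun _ _ => EvenPeakTree.eq_of_toPath_eq _ _)
          fun _ => isSchroder_and_noOddPeak_iff_exists_evenPeakTree).symm
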